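/- arXiv:1010.1952 — 3 statements merged into one kernel-verified Lean document; each statement's English description precedes it below -/
import Mathlib

section
/- The 2×2 matrix B0 with entries B0 = [[a(b−c)/(a−b), r],[ab(a−c)(c−b)/(r(a−b)²), b(c−a)/(a−b)]] (for a ≠ b and r ≠ 0) has eigenvalues 0 and −c, and the matrix B1 = [[a(c−a)/(a−b), −r],[−ab(a−c)(c−b)/(r(a−b)²), b(b−c)/(a−b)]] has eigenvalues 0 and c−a−b; moreover B0 + B1 = diag(−a, −b). -/
/-!
The characteristic polynomial of a 2×2 matrix `M` is `λ² − tr M · λ + det M`, so a singular `M`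
has eigenvalues `0` and `tr M`. Both `B0` and `B1` are singular, since the product of their
off-diagonal entries equals the product of their diagonal ones, and their traces are `−c` and
`c − a − b`.
-/

open Matrix

/-- The matrix `B0` of Proposition "matrices", case (1). -/
noncomputable def B0mat (a b c r : ℂ) : Matrix (Fin 2) (Fin 2) ℂ :=
  !![a*(b-c)/(a-b), r;
     a*b*(a-c)*(c-b)/(r*(a-b)^2), b*(c-a)/(a-b)]

/-- The matrix `B1` of Proposition "matrices", case (1). -/
noncomputable def B1mat (a b c r : ℂ) : Matrix (Fin 2) (Fin 2) ℂ :=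
  !![a*(c-a)/(a-b), -r;
     -(a*b*(a-c)*(c-b)/(r*(a-b)^2)), b*(b-c)/(a-b)]

namespace Matrix

variable {R : Type*} [CommRing R]

theorem det_smul_one_sub_fin_two (M : Matrix (Fin 2) (Fin 2) R) (μ : R) :
    (μ • (1 : Matrix (Fin 2) (Fin 2) R) - M).det = μ ^ 2 - M.trace * μ + M.det := by
  simp only [det_fin_two, trace_fin_two, sub_apply, smul_apply, one_apply_eq,
    one_apply_ne (by decide : (0 : Fin 2) ≠ 1), one_apply_ne (by decide : (1 : Fin 2) ≠ 0),
    smul_eq_mul, mul_one, mul_zero]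
  ring

theorem det_smul_one_sub_eq_zero_iff_of_det_eq_zero [IsDomain R]
    {M : Matrix (Fin 2) (Fin 2) R} (hM : M.det = 0) (μ : R) :
    (μ • (1 : Matrix (Fin 2) (Fin 2) R) - M).det = 0 ↔ μ = 0 ∨ μ = M.trace := by
  rw [det_smul_one_sub_fin_two, hM, add_zero, sq, ← sub_mul, mul_eq_zero, sub_eq_zero]
  exact or_comm

end Matrix

section

variable {a b c r : ℂ}

theorem trace_B0mat (hab : a ≠ b) : (B0mat a b c r).trace = -c := by
  have : a - b ≠ 0 := sub_ne_zero.mpr hab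
  rw [B0mat, trace_fin_two_of]
  field_simp
  ring

theorem trace_B1mat (hab : a ≠ b) : (B1mat a b c r).trace = c - a - b := by
  have : a - b ≠ 0 := sub_ne_zero.mpr hab
  rw [B1mat, trace_fin_two_of]
  field_simp
  ring

theorem det_B0mat (hab : a ≠ b) (hr : r ≠ 0) : (B0mat a b c r).det = 0 := by
  have : a - b ≠ 0 := sub_ne_zero.mpr hab
  rw [B0mat, det_fin_two_of]
  field_simp
  ring

theorem det_B1mat (hab : a ≠ b) (hr : r ≠ 0) : (B1mat a b c r).det = 0 := by
  have : a - b ≠ 0 := sub_ne_zero.mpr hab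
  rw [B1mat, det_fin_two_of]
  field_simp
  ring

theorem B0mat_add_B1mat (hab : a ≠ b) : B0mat a b c r + B1mat a b c r = !![-a, 0; 0, -b] := by
  have : a - b ≠ 0 := sub_ne_zero.mpr hab
  have h₀₀ : a*(b-c)/(a-b) + a*(c-a)/(a-b) = -a := by field_simp; ring
  have h₁₁ : b*(c-a)/(a-b) + b*(b-c)/(a-b) = -b := by field_simp; ring
  ext i j
  fin_cases i <;> fin_cases j <;> simp [B0mat, B1mat, h₀₀, h₁₁]

end

/-- `B0` has eigenvalues `0` and `−c`, `B1` has eigenvalues `0` and `c − a − b`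
(characterized as the roots of `det(λI − M) = 0`), and `B0 + B1 = diag(−a, −b)`. -/
theorem B0_B1_eigenvalues_and_sum (a b c r : ℂ) (hab : a ≠ b) (hr : r ≠ 0) :
    (∀ μ : ℂ, (μ • (1 : Matrix (Fin 2) (Fin 2) ℂ) - B0mat a b c r).det = 0 ↔
      (μ = 0 ∨ μ = -c)) ∧
    (∀ μ : ℂ, (μ • (1 : Matrix (Fin 2) (Fin 2) ℂ) - B1mat a b c r).det = 0 ↔
      (μ = 0 ∨ μ = c - a - b)) ∧
    B0mat a b c r + B1mat a b c r = !![-a, 0; 0, -b] := by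
  refine ⟨fun μ => ?_, fun μ => ?_, B0mat_add_B1mat hab⟩
  · rw [det_smul_one_sub_eq_zero_iff_of_det_eq_zero (det_B0mat hab hr), trace_B0mat hab]
  · rw [det_smul_one_sub_eq_zero_iff_of_det_eq_zero (det_B1mat hab hr), trace_B1mat hab]
end

section
/- Let θ0+θx+θ1+θ∞ = 0 and θ0 = −2. Then the rational function y(x) = [ (2−(θ∞+θ1)+θ1 x)² − 2 + θ∞ + θ1 − θ1 x² ] / [ (1−θ∞)(2−(θ∞+θ1)+θ1 x) ] solves the Painlevé VI equation with parameters (θ0, θx, θ1, θ∞) = (−2, 2−θ1−θ∞, θ1, θ∞). -/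
/-!
Along solutions of the Riccati equation
`x (x - 1) y' = (1 - θ∞) y² + ((θx + θ∞) x + θ∞ + θ1 - 1) y + θ0 x`
differentiating the equation once expresses `y''` through `x, y, y'`; substituting it turns
Painlevé VI into a rational identity in `x, y`, which holds as soon as `θ0 + θx + θ1 + θ∞ = 0`.
For `θ0 = -2` the given rational function solves this Riccati equation.
-/

/-- The residual of the Painlevé VI equation with parameters `(θ0, θx, θ1, θ∞)`
(so that α = (θ∞−1)²/2, −β = θ0²/2, γ = θ1²/2, 1/2 − δ = θx²/2). -/
noncomputable def pviRes (th0 thx th1 thi y y' y'' x : ℂ) : ℂ :=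
  y'' - ((1/2) * (1/y + 1/(y-1) + 1/(y-x)) * y'^2
    - (1/x + 1/(x-1) + 1/(y-x)) * y'
    + (y*(y-1)*(y-x))/(x^2*(x-1)^2) *
      ((thi-1)^2/2 + (-(th0^2/2))*x/y^2 + (th1^2/2)*(x-1)/(y-1)^2
        + (1/2 - thx^2/2)*(x*(x-1))/(y-x)^2))

/-- The rational solution for `θ0 = −2`:
`y(x) = [(2−(θ∞+θ1)+θ1 x)² − 2 + θ∞ + θ1 − θ1 x²] / [(1−θ∞)(2−(θ∞+θ1)+θ1 x)]`. -/
noncomputable def ratY2 (th1 thi : ℂ) : ℂ → ℂ :=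
  fun x => ((2 - (thi + th1) + th1*x)^2 - 2 + thi + th1 - th1*x^2)
    / ((1 - thi)*(2 - (thi + th1) + th1*x))

open Filter Topology

def riccatiRHS (a b c d x y : ℂ) : ℂ := a * y ^ 2 + (b * x + c) * y + d * x

lemma deriv_deriv_of_riccati {f : ℂ → ℂ} {a b c d x : ℂ} (hx0 : x ≠ 0) (hx1 : x ≠ 1)
    (hf : DifferentiableAt ℂ f x)
    (hric : ∀ᶠ z in 𝓝 x, z * (z - 1) * deriv f z = riccatiRHS a b c d z (f z)) :
    x * (x - 1) * deriv (deriv f) x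
      = 2 * a * f x * deriv f x + b * f x + (b * x + c - (2 * x - 1)) * deriv f x + d := by
  have hxx : x * (x - 1) ≠ 0 := mul_ne_zero hx0 (sub_ne_zero.mpr hx1)
  have hxx_ev : ∀ᶠ z in 𝓝 x, z * (z - 1) ≠ 0 :=
    (show Continuous fun z : ℂ => z * (z - 1) by fun_prop).continuousAt.eventually_ne hxx
  have hderiv : deriv f =ᶠ[𝓝 x] fun z => riccatiRHS a b c d z (f z) / (z * (z - 1)) := by
    filter_upwards [hric, hxx_ev] with z hz hz0
    rw [← hz, mul_div_cancel_left₀ _ hz0]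
  have hf' : DifferentiableAt ℂ (deriv f) x := by
    refine DifferentiableAt.congr_of_eventuallyEq ?_ hderiv
    unfold riccatiRHS
    fun_prop (disch := exact hxx)
  have hR : HasDerivAt (fun z => riccatiRHS a b c d z (f z))
      (2 * a * f x * deriv f x + b * f x + (b * x + c) * deriv f x + d) x := by
    refine (((hf.hasDerivAt.fun_pow 2).const_mul a).fun_add
      ((((hasDerivAt_id' x).const_mul b).add_const c).fun_mul hf.hasDerivAt) |>.fun_add
      ((hasDerivAt_id' x).const_mul d)).congr_deriv ?_
    ring
  have hL : HasDerivAt (fun z => z * (z - 1) * deriv f z)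
      ((2 * x - 1) * deriv f x + x * (x - 1) * deriv (deriv f) x) x := by
    refine (((hasDerivAt_id' x).fun_mul ((hasDerivAt_id' x).sub_const 1)).fun_mul
      hf'.hasDerivAt).congr_deriv ?_
    ring
  linear_combination hL.unique (hR.congr_of_eventuallyEq hric)

lemma pviRes_eq_zero_of_riccati {th0 thx th1 thi x y y' y'' : ℂ}
    (hsum : th0 + thx + th1 + thi = 0) (hx0 : x ≠ 0) (hx1 : x ≠ 1)
    (hy0 : y ≠ 0) (hy1 : y ≠ 1) (hyx : y ≠ x)
    (h' : x * (x - 1) * y' = riccatiRHS (1 - thi) (thx + thi) (thi + th1 - 1) th0 x y)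
    (h'' : x * (x - 1) * y'' = 2 * (1 - thi) * y * y' + (thx + thi) * y
      + ((thx + thi) * x + (thi + th1 - 1) - (2 * x - 1)) * y' + th0) :
    pviRes th0 thx th1 thi y y' y'' x = 0 := by
  have hx1' : x - 1 ≠ 0 := sub_ne_zero.mpr hx1
  have hy1' : y - 1 ≠ 0 := sub_ne_zero.mpr hy1
  have hyx' : y - x ≠ 0 := sub_ne_zero.mpr hyx
  have hxx : x * (x - 1) ≠ 0 := mul_ne_zero hx0 hx1'
  obtain rfl : thx = -th0 - th1 - thi := by linear_combination hsum
  obtain rfl := eq_div_of_mul_eq hxx ((mul_comm _ _).trans h'')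
  obtain rfl := eq_div_of_mul_eq hxx ((mul_comm _ _).trans h')
  unfold pviRes riccatiRHS
  field_simp
  ring

theorem pviRes_deriv_eq_zero_of_riccati {th0 thx th1 thi x : ℂ} {f : ℂ → ℂ}
    (hsum : th0 + thx + th1 + thi = 0) (hx0 : x ≠ 0) (hx1 : x ≠ 1)
    (hf : DifferentiableAt ℂ f x)
    (hric : ∀ᶠ z in 𝓝 x,
      z * (z - 1) * deriv f z = riccatiRHS (1 - thi) (thx + thi) (thi + th1 - 1) th0 z (f z))
    (hy0 : f x ≠ 0) (hy1 : f x ≠ 1) (hyx : f x ≠ x) :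
    pviRes th0 thx th1 thi (f x) (deriv f x) (deriv (deriv f) x) x = 0 :=
  pviRes_eq_zero_of_riccati hsum hx0 hx1 hy0 hy1 hyx hric.self_of_nhds
    (deriv_deriv_of_riccati hx0 hx1 hf hric)

lemma hasDerivAt_ratY2 {th1 thi z : ℂ} (hthi : thi ≠ 1) (hz : 2 - (thi + th1) + th1 * z ≠ 0) :
    HasDerivAt (ratY2 th1 thi)
      (th1 * ((2 - (thi + th1) + th1 * z - z) ^ 2 + (th1 - 1) * z ^ 2 + (2 - thi - th1))
        / ((1 - thi) * (2 - (thi + th1) + th1 * z) ^ 2)) z := by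
  have hthi' : 1 - thi ≠ 0 := sub_ne_zero.mpr hthi.symm
  have hL : HasDerivAt (fun z => 2 - (thi + th1) + th1 * z) th1 z := by
    simpa using ((hasDerivAt_id' z).const_mul th1).const_add (2 - (thi + th1))
  refine ((((hL.fun_pow 2).sub_const 2).add_const thi |>.add_const th1).fun_sub
      ((hasDerivAt_pow 2 z).const_mul th1) |>.fun_div (hL.const_mul (1 - thi))
      (mul_ne_zero hthi' hz)).congr_deriv ?_
  field_simp
  ring

lemma ratY2_riccati {th1 thi z : ℂ} (hthi : thi ≠ 1) (hz : 2 - (thi + th1) + th1 * z ≠ 0) :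
    z * (z - 1) * deriv (ratY2 th1 thi) z
      = riccatiRHS (1 - thi) (2 - th1) (thi + th1 - 1) (-2) z (ratY2 th1 thi z) := by
  have hthi' : 1 - thi ≠ 0 := sub_ne_zero.mpr hthi.symm
  -- `field_simp` rewrites the denominator with `z * th1` and needs it in that form
  have hz' : 2 - (thi + th1) + z * th1 ≠ 0 := by rwa [mul_comm]
  rw [(hasDerivAt_ratY2 hthi hz).deriv]
  simp only [ratY2, riccatiRHS]
  field_simp
  ring

/-- For `θ0 + θx + θ1 + θ∞ = 0` and `θ0 = −2` (so `θx = 2−θ1−θ∞`), the rational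
function `y(x) = [(2−(θ∞+θ1)+θ1x)² − 2 + θ∞ + θ1 − θ1x²]/[(1−θ∞)(2−(θ∞+θ1)+θ1x)]`
solves Painlevé VI with parameters `(−2, 2−θ1−θ∞, θ1, θ∞)` away from `0, 1` and
the zeros of the denominator. -/
theorem rational_solution_theta0_neg_two
    (th1 thi : ℂ) (hthi : thi ≠ 1)
    (x : ℂ) (hx0 : x ≠ 0) (hx1 : x ≠ 1)
    (hden : 2 - (thi + th1) + th1*x ≠ 0)
    (hy0 : ratY2 th1 thi x ≠ 0) (hy1 : ratY2 th1 thi x ≠ 1)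
    (hyx : ratY2 th1 thi x ≠ x) :
    pviRes (-2) (2 - th1 - thi) th1 thi (ratY2 th1 thi x)
      (deriv (ratY2 th1 thi) x) (deriv (deriv (ratY2 th1 thi)) x) x = 0 := by
  have hden_ev : ∀ᶠ z in 𝓝 x, 2 - (thi + th1) + th1 * z ≠ 0 :=
    (show Continuous fun z : ℂ => 2 - (thi + th1) + th1 * z by fun_prop).continuousAt.eventually_ne
      hden
  refine pviRes_deriv_eq_zero_of_riccati (by ring) hx0 hx1
    (hasDerivAt_ratY2 hthi hden).differentiableAt ?_ hy0 hy1 hyx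
  filter_upwards [hden_ev] with z hz
  rw [ratY2_riccati hthi hz]
  simp only [riccatiRHS]
  ring
end

section
/- Define the monodromy matrices M0 = G·exp(iπθx σ3)·G⁻¹, Mx = G·exp(−iπθx σ3)·G⁻¹, M1 = M∞ = exp(−iπθ∞ σ3), where G = [[1,1],[(s+θx)/r, s/r]], σ3 = diag(1,−1), r ≠ 0, θx ≠ 0. Then M0·Mx = I, and tr(M1 M0) = 2cos(π(θ∞+θx)) − (2s/θx)[cos(π(θ∞−θx)) − cos(π(θ∞+θx))]; consequently s = θx[2cos(π(θ∞+θx)) − tr(M1 M0)] / (2[cos(π(θ∞−θx)) − cos(π(θ∞+θx))]) whenever the denominator is nonzero. -/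
/-!
`G` has determinant `-θx / r`, so `M0` and `Mx` are `G`-conjugates of `exp(±iπθx σ3)`, whose
product is `1`. The trace of the diagonal matrix `M1` times `M0` only sees the diagonal of `M0`,
which is affine in `s`; expanding the cosines into exponentials turns the trace formula into a
ring identity, and the formula for `s` solves it.
-/

open Matrix

/-- `exp(iπθ σ3) = diag(e^{iπθ}, e^{−iπθ})`. -/
noncomputable def expPiSigma3 (θ : ℂ) : Matrix (Fin 2) (Fin 2) ℂ :=
  !![Complex.exp ((Real.pi : ℂ) * Complex.I * θ), 0;
     0, Complex.exp (-((Real.pi : ℂ) * Complex.I * θ))]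

/-- The matrix `G = [[1,1],[(s+θx)/r, s/r]]`. -/
noncomputable def Gmat (s thx r : ℂ) : Matrix (Fin 2) (Fin 2) ℂ :=
  !![1, 1; (s + thx)/r, s/r]

theorem Matrix.conj_mul_conj {n R : Type*} [Fintype n] [DecidableEq n] [CommRing R]
    {G : Matrix n n R} (hG : IsUnit G.det) (A B : Matrix n n R) :
    G * A * G⁻¹ * (G * B * G⁻¹) = G * (A * B) * G⁻¹ := by
  simp only [Matrix.mul_assoc, nonsing_inv_mul_cancel_left _ _ hG]

theorem expPiSigma3_add (θ φ : ℂ) : expPiSigma3 (θ + φ) = expPiSigma3 θ * expPiSigma3 φ := by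
  simp only [expPiSigma3, mul_fin_two, mul_add, neg_add, Complex.exp_add]
  simp

theorem expPiSigma3_zero : expPiSigma3 0 = 1 := by
  simp [expPiSigma3, one_fin_two]

open Complex in
theorem two_mul_cos_pi_mul_add (u v : ℂ) :
    2 * cos (Real.pi * (u + v)) = exp (Real.pi * I * u) * exp (Real.pi * I * v)
      + exp (-(Real.pi * I * u)) * exp (-(Real.pi * I * v)) := by
  rw [two_cos, ← exp_add, ← exp_add]
  congr 2 <;> ring

section Gmat

variable {r s thx : ℂ}

theorem det_Gmat (hr : r ≠ 0) : (Gmat s thx r).det = -thx / r := by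
  rw [Gmat, det_fin_two_of]
  field_simp
  ring

theorem Gmat_inv (hr : r ≠ 0) (hthx : thx ≠ 0) :
    (Gmat s thx r)⁻¹ = !![-s / thx, r / thx; (s + thx) / thx, -r / thx] := by
  rw [inv_def, det_Gmat hr, Gmat, adjugate_fin_two_of, Ring.inverse_eq_inv', inv_div]
  ext i j
  fin_cases i <;> fin_cases j <;> simp <;> field_simp

theorem trace_diagonal_mul_conj_Gmat (hr : r ≠ 0) (hthx : thx ≠ 0) (a a' b b' : ℂ) :
    (!![b', 0; 0, b] * (Gmat s thx r * !![a, 0; 0, a'] * (Gmat s thx r)⁻¹)).trace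
      = b' * a' + b * a - s / thx * (b' * a + b * a' - b' * a' - b * a) := by
  rw [Gmat_inv hr hthx, Gmat, mul_fin_two, mul_fin_two, mul_fin_two, trace_fin_two_of]
  field_simp
  ring

theorem trace_expPiSigma3_neg_mul_conj_Gmat (hr : r ≠ 0) (hthx : thx ≠ 0) (thi : ℂ) :
    (expPiSigma3 (-thi) * (Gmat s thx r * expPiSigma3 thx * (Gmat s thx r)⁻¹)).trace
      = 2 * Complex.cos ((Real.pi : ℂ) * (thi + thx))
        - (2 * s / thx) * (Complex.cos ((Real.pi : ℂ) * (thi - thx))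
          - Complex.cos ((Real.pi : ℂ) * (thi + thx))) := by
  have hplus := two_mul_cos_pi_mul_add thi thx
  have hminus := two_mul_cos_pi_mul_add thi (-thx)
  rw [← sub_eq_add_neg] at hminus
  rw [expPiSigma3, expPiSigma3, trace_diagonal_mul_conj_Gmat hr hthx]
  simp only [mul_neg, neg_neg] at hminus ⊢
  linear_combination (-(1 + s / thx)) * hplus + (s / thx) * hminus

end Gmat

/-- For `M0 = G exp(iπθx σ3) G⁻¹`, `Mx = G exp(−iπθx σ3) G⁻¹`,
`M1 = M∞ = exp(−iπθ∞ σ3)`: one has `M0 Mx = I`,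
`tr(M1M0) = 2cos(π(θ∞+θx)) − (2s/θx)[cos(π(θ∞−θx)) − cos(π(θ∞+θx))]`,
and hence `s = θx[2cos(π(θ∞+θx)) − tr(M1M0)]/(2[cos(π(θ∞−θx)) − cos(π(θ∞+θx))])`
whenever the denominator is nonzero. -/
theorem monodromy_trace_identity (r s thx thi : ℂ) (hr : r ≠ 0) (hthx : thx ≠ 0) :
    (Gmat s thx r * expPiSigma3 thx * (Gmat s thx r)⁻¹) *
        (Gmat s thx r * expPiSigma3 (-thx) * (Gmat s thx r)⁻¹) = 1
    ∧ (expPiSigma3 (-thi) *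
          (Gmat s thx r * expPiSigma3 thx * (Gmat s thx r)⁻¹)).trace
        = 2 * Complex.cos ((Real.pi : ℂ) * (thi + thx))
          - (2*s/thx) * (Complex.cos ((Real.pi : ℂ) * (thi - thx))
              - Complex.cos ((Real.pi : ℂ) * (thi + thx)))
    ∧ (Complex.cos ((Real.pi : ℂ) * (thi - thx))
          - Complex.cos ((Real.pi : ℂ) * (thi + thx)) ≠ 0 →
        s = thx * (2 * Complex.cos ((Real.pi : ℂ) * (thi + thx))
              - (expPiSigma3 (-thi) *
                  (Gmat s thx r * expPiSigma3 thx * (Gmat s thx r)⁻¹)).trace)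
            / (2 * (Complex.cos ((Real.pi : ℂ) * (thi - thx))
                - Complex.cos ((Real.pi : ℂ) * (thi + thx))))) := by
  have hG : IsUnit (Gmat s thx r).det := by
    rw [det_Gmat hr]
    exact (div_ne_zero (neg_ne_zero.2 hthx) hr).isUnit
  have htrace := trace_expPiSigma3_neg_mul_conj_Gmat (s := s) hr hthx thi
  refine ⟨?_, htrace, fun hden => ?_⟩
  · rw [conj_mul_conj hG, ← expPiSigma3_add, add_neg_cancel, expPiSigma3_zero, Matrix.mul_one,
      mul_nonsing_inv _ hG]
  · rw [htrace]
    field_simp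
    ring
end
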